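/- Let (X,d) be a metric space, {x_n}_{n≥0} a sequence in X, and m : X × X → [0,∞) a nonnegative function such that for any two subsequences {x_{p_n}} and {x_{q_n}}, limsup_{n→∞} m(x_{p_n}, x_{q_n}) ≤ limsup_{n→∞} d(x_{p_n}, x_{q_n}). Suppose d(x_n, x_{n+1}) → 0, and suppose that for every ε > 0 there exists a sequence {ν_n} of nonnegative integers such that for any two subsequences {x_{p_n}} and {x_{q_n}}, if limsup_{n→∞} m(x_{p_n}, x_{q_n}) ≤ ε then there exists N with d(x_{p_n+ν_n}, x_{q_n+ν_n}) ≤ ε for all n ≥ N. Then {x_n} is a Cauchy sequence. -/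

import Mathlib

/-!
If the sequence were not Cauchy, there would be `ε > 0` and pairs of indices arbitrarily far
out at distance `≥ ε`. Since consecutive terms get close, walking from one index of such a pair
towards the other produces, for any prescribed shift `k`, pairs `p, q` whose shifted terms
`x (p + k), x (q + k)` are more than `ε / 2` apart while `x p, x q` are at most `ε / 2 + η`
apart. Taking `k = νₙ` and `η = 1 / (n + 1)` gives subsequences with
`limsup d(x_{pₙ}, x_{qₙ}) ≤ ε / 2`, hence `limsup m(x_{pₙ}, x_{qₙ}) ≤ ε / 2`, and the hypothesis
then forces `d(x_{pₙ + νₙ}, x_{qₙ + νₙ}) ≤ ε / 2` for large `n`, a contradiction.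
-/

open Filter

section StepBounds

variable {X : Type*} [PseudoMetricSpace X] {x : ℕ → X} {c : ℕ} {δ : ℝ}

lemma dist_add_le_mul_of_dist_succ_le (hstep : ∀ t ≥ c, dist (x t) (x (t + 1)) ≤ δ)
    {a : ℕ} (ha : c ≤ a) (k : ℕ) : dist (x a) (x (a + k)) ≤ k * δ := by
  calc dist (x a) (x (a + k)) ≤ ∑ t ∈ Finset.Ico a (a + k), dist (x t) (x (t + 1)) :=
        dist_le_Ico_sum_dist x (Nat.le_add_right a k)
    _ ≤ (Finset.Ico a (a + k)).card • δ :=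
        Finset.sum_le_card_nsmul _ _ _ fun t ht => hstep t (ha.trans (Finset.mem_Ico.1 ht).1)
    _ = k * δ := by simp

lemma exists_dist_gt_and_le_add (hstep : ∀ t ≥ c, dist (x t) (x (t + 1)) ≤ δ)
    {i : ℕ} (hi : c ≤ i) {r : ℝ} (hr : 0 ≤ r) (hj : ∃ j, r < dist (x i) (x (i + j))) :
    ∃ b, r < dist (x i) (x (i + b)) ∧ dist (x i) (x (i + b)) ≤ r + δ := by
  classical
  refine ⟨Nat.find hj, Nat.find_spec hj, ?_⟩
  obtain ⟨b, hb⟩ : ∃ b, Nat.find hj = b + 1 :=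
    Nat.exists_eq_succ_of_ne_zero fun h0 => by
      have := Nat.find_spec hj
      rw [h0, add_zero, dist_self] at this
      exact hr.not_gt this
  have hprev : dist (x i) (x (i + b)) ≤ r :=
    not_lt.1 (Nat.find_min hj (by omega))
  calc dist (x i) (x (i + Nat.find hj))
      ≤ dist (x i) (x (i + b)) + dist (x (i + b)) (x (i + b + 1)) := by
        rw [hb, ← add_assoc]; exact dist_triangle _ _ _
    _ ≤ r + δ := add_le_add hprev (hstep _ (hi.trans (Nat.le_add_right i b)))

end StepBounds

lemma exists_dist_shift_gt_and_dist_le {X : Type*} [PseudoMetricSpace X] {x : ℕ → X}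
    (hd : Tendsto (fun n => dist (x n) (x (n + 1))) atTop (nhds 0)) {r : ℝ} (hr : 0 ≤ r)
    (hfar : ∀ N, ∃ i ≥ N, ∃ j ≥ N, r < dist (x i) (x j)) (k M : ℕ) {η : ℝ} (hη : 0 < η) :
    ∃ p q, M ≤ p ∧ M ≤ q ∧ r < dist (x (p + k)) (x (q + k)) ∧ dist (x p) (x q) ≤ r + η := by
  set δ := η / (2 * k + 1)
  have hδ : (2 * k + 1) * δ = η := mul_div_cancel₀ η (by positivity)
  have hδpos : 0 < δ := by positivity
  obtain ⟨c, hc⟩ := (hd.eventually (ge_mem_nhds hδpos)).exists_forall_of_atTop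
  obtain ⟨i, hi, j, hj, hij⟩ := hfar (c + M + k)
  wlog hle : i ≤ j generalizing i j
  · exact this j hj i hi (dist_comm (x i) (x j) ▸ hij) (le_of_not_ge hle)
  obtain ⟨p, rfl⟩ := Nat.exists_eq_add_of_le' (le_of_add_le_right hi)
  obtain ⟨j', rfl⟩ := Nat.exists_eq_add_of_le hle
  -- Cross the level `r` in the shifted sequence `t ↦ x (t + k)`; undoing the shift costs `k` steps
  -- at each end, whence `δ = η / (2k + 1)`.
  have hshift : ∀ t ≥ c, dist (x (t + k)) (x (t + 1 + k)) ≤ δ := fun t ht => by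
    rw [add_right_comm]; exact hc _ (ht.trans (Nat.le_add_right t k))
  have hpc : c ≤ p := by omega
  obtain ⟨b, hgt, hle'⟩ :=
    exists_dist_gt_and_le_add (x := fun t => x (t + k)) hshift hpc hr
      ⟨j', by rwa [add_right_comm]⟩
  have hp := dist_add_le_mul_of_dist_succ_le hc hpc k
  have hq := dist_add_le_mul_of_dist_succ_le hc (hpc.trans (Nat.le_add_right p b)) k
  refine ⟨p, p + b, by omega, by omega, hgt, ?_⟩
  calc dist (x p) (x (p + b))
      ≤ dist (x p) (x (p + k)) + dist (x (p + k)) (x (p + b + k)) +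
          dist (x (p + b + k)) (x (p + b)) := dist_triangle4 _ _ _ _
    _ ≤ k * δ + (r + δ) + k * δ := by rw [dist_comm (x (p + b + k))]; gcongr
    _ = r + η := by rw [← hδ]; ring

lemma exists_strictMono_pair {P : ℕ → ℕ → ℕ → Prop}
    (h : ∀ n M, ∃ p q, M ≤ p ∧ M ≤ q ∧ P n p q) :
    ∃ p q : ℕ → ℕ, StrictMono p ∧ StrictMono q ∧ ∀ n, P n (p n) (q n) := by
  choose f g hf hg hP using h
  let M : ℕ → ℕ := fun n => Nat.rec 0 (fun k Mk => max (f k Mk) (g k Mk) + 1) n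
  refine ⟨fun n => f n (M n), fun n => g n (M n), strictMono_nat_of_lt_succ fun n => ?_,
    strictMono_nat_of_lt_succ fun n => ?_, fun n => hP n (M n)⟩
  · exact (Nat.lt_succ_of_le (le_max_left _ _)).trans_le (hf (n + 1) (M (n + 1)))
  · exact (Nat.lt_succ_of_le (le_max_right _ _)).trans_le (hg (n + 1) (M (n + 1)))

lemma limsup_le_of_le_add_one_div {u : ℕ → ℝ} (hu : ∀ n, 0 ≤ u n) {r : ℝ}
    (h : ∀ n, u n ≤ r + 1 / ((n : ℝ) + 1)) : limsup u atTop ≤ r := by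
  have hlim : Tendsto (fun n : ℕ => r + 1 / ((n : ℝ) + 1)) atTop (nhds r) := by
    simpa using
      (tendsto_const_nhds (x := r)).add (tendsto_one_div_add_atTop_nhds_zero_nat (𝕜 := ℝ))
  calc limsup u atTop ≤ limsup (fun n : ℕ => r + 1 / ((n : ℝ) + 1)) atTop :=
        limsup_le_limsup (Eventually.of_forall h) (isCoboundedUnder_le_of_le atTop hu)
          hlim.isBoundedUnder_le
    _ = r := hlim.limsup_eq

theorem stmt1_general {X : Type*} [MetricSpace X] (x : ℕ → X) (m : X → X → ℝ)
    (hm : ∀ p q : ℕ → ℕ, StrictMono p → StrictMono q →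
      limsup (fun n => m (x (p n)) (x (q n))) atTop ≤
      limsup (fun n => dist (x (p n)) (x (q n))) atTop)
    (hd : Tendsto (fun n => dist (x n) (x (n + 1))) atTop (nhds 0))
    (h : ∀ ε : ℝ, 0 < ε → ∃ ν : ℕ → ℕ,
      ∀ p q : ℕ → ℕ, StrictMono p → StrictMono q →
        limsup (fun n => m (x (p n)) (x (q n))) atTop ≤ ε →
        ∃ N : ℕ, ∀ n ≥ N, dist (x (p n + ν n)) (x (q n + ν n)) ≤ ε) :
    CauchySeq x := by
  by_contra hx
  obtain ⟨ε, hε, hfar⟩ : ∃ ε > 0, ∀ N, ∃ i ≥ N, ∃ j ≥ N, ε ≤ dist (x i) (x j) := by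
    simpa [Metric.cauchySeq_iff] using hx
  have hfar' : ∀ N, ∃ i ≥ N, ∃ j ≥ N, ε / 2 < dist (x i) (x j) := fun N => by
    obtain ⟨i, hi, j, hj, hij⟩ := hfar N
    exact ⟨i, hi, j, hj, (half_lt_self hε).trans_le hij⟩
  obtain ⟨ν, hν⟩ := h (ε / 2) (half_pos hε)
  obtain ⟨p, q, hp, hq, hpq⟩ := exists_strictMono_pair fun n M =>
    exists_dist_shift_gt_and_dist_le hd (half_pos hε).le hfar' (ν n) M
      (Nat.one_div_pos_of_nat (n := n))
  have hlimsup : limsup (fun n => dist (x (p n)) (x (q n))) atTop ≤ ε / 2 :=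
    limsup_le_of_le_add_one_div (fun _ => dist_nonneg) fun n => (hpq n).2
  obtain ⟨N, hN⟩ := hν p q hp hq ((hm p q hp hq).trans hlimsup)
  exact (hN N le_rfl).not_gt (hpq N).1

/-- Theorem 2.3. -/
theorem stmt1 {X : Type*} [MetricSpace X] (x : ℕ → X) (m : X → X → ℝ)
    (hm0 : ∀ a b : X, 0 ≤ m a b)
    (hm : ∀ p q : ℕ → ℕ, StrictMono p → StrictMono q →
      limsup (fun n => m (x (p n)) (x (q n))) atTop ≤
      limsup (fun n => dist (x (p n)) (x (q n))) atTop)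
    (hd : Tendsto (fun n => dist (x n) (x (n + 1))) atTop (nhds 0))
    (h : ∀ ε : ℝ, 0 < ε → ∃ ν : ℕ → ℕ,
      ∀ p q : ℕ → ℕ, StrictMono p → StrictMono q →
        limsup (fun n => m (x (p n)) (x (q n))) atTop ≤ ε →
        ∃ N : ℕ, ∀ n ≥ N, dist (x (p n + ν n)) (x (q n + ν n)) ≤ ε) :
    CauchySeq x :=
  stmt1_general x m hm hd h
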